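/- If N is an odd positive integer divisible by 3, then ρ(2/3, N) = 2/9; moreover, the minimum is attained by the indicator function of the complement of the set of multiples of 3 in ℤ/Nℤ. -/
import Mathlib

open Finset

lemma sum_range_zmod {N : ℕ} [NeZero N] (f : ZMod N → ℝ) :
    ∑ n ∈ range N, f (n : ZMod N) = ∑ x : ZMod N, f x := by
  refine Finset.sum_nbij' (fun n => (n : ZMod N)) (fun x => x.val) ?_ ?_ ?_ ?_ ?_
  · intro a _; exact mem_univ _
  · intro x _; exact mem_range.2 (ZMod.val_lt x)
  · intro a ha; exact ZMod.val_cast_of_lt (mem_range.1 ha)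
  · intro x _; exact ZMod.natCast_rightInverse x
  · intro a _; rfl

lemma sum_univ_zmod3 (H : ZMod 3 → ℝ) : ∑ a : ZMod 3, H a = H 0 + H 1 + H 2 :=
  Fin.sum_univ_three H

lemma sum_range_three_mul (M : ℕ) (H : ZMod 3 → ℝ) :
    ∑ n ∈ range (3 * M), H (n : ZMod 3) = M * (H 0 + H 1 + H 2) := by
  induction M with
  | zero => simp
  | succ m ih =>
    have h : 3 * (m + 1) = (3 * m) + 1 + 1 + 1 := by ring
    have h0 : ((3 * m : ℕ) : ZMod 3) = 0 := by
      rw [Nat.cast_mul, ZMod.natCast_self, zero_mul]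
    rw [h, sum_range_succ, sum_range_succ, sum_range_succ, ih]
    push_cast [h0]
    ring

lemma sum_shift {N : ℕ} [NeZero N] (g : ZMod N → ℝ) (c : ZMod N) :
    ∑ x : ZMod N, g (c + x) = ∑ x : ZMod N, g x :=
  Fintype.sum_equiv (Equiv.addLeft c) _ g (fun _ => rfl)

lemma sum_two_mul {N : ℕ} [NeZero N] (hodd : Odd N) (g : ZMod N → ℝ) :
    ∑ x : ZMod N, g (2 * x) = ∑ x : ZMod N, g x := by
  have hu : IsUnit (2 : ZMod N) := by
    have := (ZMod.isUnit_iff_coprime 2 N).2 (Nat.coprime_two_left.2 hodd)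
    simpa using this
  have hbij : Function.Bijective (fun x : ZMod N => 2 * x) :=
    Finite.injective_iff_bijective.1 hu.mul_right_injective
  exact Fintype.sum_bijective _ hbij _ g (fun _ => rfl)

/-- `Λ₃(f; N) = N⁻² ∑_{n,d ∈ ℤ/N} f(n) f(n+d) f(n+2d)`. -/
noncomputable def lambda3 (N : ℕ) (f : ZMod N → ℝ) : ℝ :=
  ((N : ℝ) ^ 2)⁻¹ * ∑ n ∈ Finset.range N, ∑ d ∈ Finset.range N,
    f n * f (n + d) * f (n + 2 * d)

/-- `𝔼(f) = N⁻¹ ∑_{n ∈ ℤ/N} f(n)`. -/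
noncomputable def expect (N : ℕ) (f : ZMod N → ℝ) : ℝ :=
  (N : ℝ)⁻¹ * ∑ n ∈ Finset.range N, f n

/-- `ρ(υ, N)`: the minimum of `Λ₃(f; N)` over `f : ℤ/N → [0,1]` with `𝔼(f) ≥ υ`. -/
noncomputable def rho (υ : ℝ) (N : ℕ) : ℝ :=
  sInf {x : ℝ | ∃ f : ZMod N → ℝ,
    (∀ n, f n ∈ Set.Icc (0 : ℝ) 1) ∧ υ ≤ expect N f ∧ lambda3 N f = x}

/-- The indicator of the complement of the multiples of `3` in `ℤ/N`. -/
noncomputable def nonMultiplesOfThreeIndicator (N : ℕ) : ZMod N → ℝ :=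
  fun n => if (3 : ℕ) ∣ n.val then 0 else 1

lemma lambda3_ge (N : ℕ) (hN : 0 < N) (hodd : Odd N) (f : ZMod N → ℝ)
    (hf : ∀ n, f n ∈ Set.Icc (0 : ℝ) 1) (hmean : 2 / 3 ≤ expect N f) :
    2 / 9 ≤ lambda3 N f := by
  haveI : NeZero N := ⟨hN.ne'⟩
  have hNpos : (0 : ℝ) < N := by exact_mod_cast hN
  obtain ⟨g, hgdef⟩ : ∃ g : ZMod N → ℝ, ∀ x, g x = 1 - f x :=
    ⟨fun x => 1 - f x, fun _ => rfl⟩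
  obtain ⟨T, hT⟩ : ∃ T : ℝ, T = ∑ x : ZMod N, g x := ⟨_, rfl⟩
  have hT0 : 0 ≤ T := by
    rw [hT]
    exact Finset.sum_nonneg fun x _ => by rw [hgdef]; linarith [(hf x).2]
  have hsumf : ∑ x : ZMod N, f x = N - T := by
    rw [hT, Finset.sum_congr rfl fun x _ => hgdef x, Finset.sum_sub_distrib]
    simp [Finset.sum_const, card_univ, ZMod.card]
  have hT3 : 3 * T ≤ N := by
    have h1 : (2:ℝ)/3 * N ≤ ∑ x : ZMod N, f x := by
      have h2 := hmean
      simp only [_root_.expect] at h2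
      rw [sum_range_zmod f] at h2
      have h3 := mul_le_mul_of_nonneg_right h2 hNpos.le
      calc (2:ℝ)/3 * N ≤ ((N:ℝ)⁻¹ * ∑ x : ZMod N, f x) * N := h3
        _ = ∑ x : ZMod N, f x := by field_simp
    rw [hsumf] at h1; linarith
  have hpt : ∀ x y : ZMod N, (1 : ℝ) - g x - g (x+y) - g (x+2*y)
      + g x * g (x+y) + g (x+y) * g (x+2*y) ≤ f x * f (x+y) * f (x+2*y) := by
    intro x y
    have h1 := hf x; have h2 := hf (x+y); have h3 := hf (x+2*y)
    simp only [Set.mem_Icc] at h1 h2 h3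
    simp only [hgdef]
    nlinarith [mul_nonneg (mul_nonneg (sub_nonneg.2 h1.2) (sub_nonneg.2 h3.2)) h2.1]
  have e2 : ∑ x : ZMod N, ∑ _y : ZMod N, g x = N * T := by
    simp only [Finset.sum_const, card_univ, ZMod.card, nsmul_eq_mul]
    rw [← Finset.mul_sum, ← hT]
  have e3 : ∑ x : ZMod N, ∑ y : ZMod N, g (x + y) = N * T := by
    have h : ∀ x : ZMod N, ∑ y : ZMod N, g (x + y) = T := fun x => by
      rw [sum_shift g x, ← hT]
    rw [Finset.sum_congr rfl fun x _ => h x, Finset.sum_const, card_univ, ZMod.card,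
      nsmul_eq_mul]
  have e4 : ∑ x : ZMod N, ∑ y : ZMod N, g (x + 2*y) = N * T := by
    have h : ∀ x : ZMod N, ∑ y : ZMod N, g (x + 2*y) = T := fun x => by
      rw [sum_two_mul hodd (fun z => g (x + z)), sum_shift g x, ← hT]
    rw [Finset.sum_congr rfl fun x _ => h x, Finset.sum_const, card_univ, ZMod.card,
      nsmul_eq_mul]
  have e5 : ∑ x : ZMod N, ∑ y : ZMod N, g x * g (x + y) = T^2 := by
    have h : ∀ x : ZMod N, ∑ y : ZMod N, g x * g (x + y) = g x * T := fun x => by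
      rw [← Finset.mul_sum, sum_shift g x, ← hT]
    rw [Finset.sum_congr rfl fun x _ => h x, ← Finset.sum_mul, ← hT, sq]
  have e6 : ∑ x : ZMod N, ∑ y : ZMod N, g (x + y) * g (x + 2*y) = T^2 := by
    rw [Finset.sum_comm]
    have h : ∀ y : ZMod N, ∑ x : ZMod N, g (x + y) * g (x + 2*y)
        = ∑ z : ZMod N, g z * g (z + y) := by
      intro y
      refine Fintype.sum_equiv (Equiv.addRight y) _ _ (fun x => ?_)
      simp only [Equiv.coe_addRight]
      rw [show x + 2*y = x + y + y by ring]
    rw [Finset.sum_congr rfl fun y _ => h y, Finset.sum_comm]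
    have h2 : ∀ z : ZMod N, ∑ y : ZMod N, g z * g (z + y) = g z * T := fun z => by
      rw [← Finset.mul_sum, sum_shift g z, ← hT]
    rw [Finset.sum_congr rfl fun z _ => h2 z, ← Finset.sum_mul, ← hT, sq]
  have hS : (N:ℝ)^2 - 3*(N*T) + 2*T^2
      ≤ ∑ x : ZMod N, ∑ y : ZMod N, f x * f (x+y) * f (x+2*y) := by
    have hsplit : ∑ x : ZMod N, ∑ y : ZMod N, ((1 : ℝ) - g x - g (x+y) - g (x+2*y)
        + g x * g (x+y) + g (x+y) * g (x+2*y)) = (N:ℝ)^2 - 3*(N*T) + 2*T^2 := by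
      simp only [Finset.sum_add_distrib, Finset.sum_sub_distrib]
      rw [e2, e3, e4, e5, e6]
      simp only [Finset.sum_const, card_univ, ZMod.card, nsmul_eq_mul, mul_one]
      ring
    calc (N:ℝ)^2 - 3*(N*T) + 2*T^2
        = ∑ x : ZMod N, ∑ y : ZMod N, ((1 : ℝ) - g x - g (x+y) - g (x+2*y)
          + g x * g (x+y) + g (x+y) * g (x+2*y)) := hsplit.symm
      _ ≤ _ := Finset.sum_le_sum fun x _ => Finset.sum_le_sum fun y _ => hpt x y
  have hconv : lambda3 N f = ((N:ℝ)^2)⁻¹ * ∑ x : ZMod N, ∑ y : ZMod N,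
      f x * f (x+y) * f (x+2*y) := by
    rw [lambda3]
    congr 1
    rw [← sum_range_zmod (fun x => ∑ y : ZMod N, f x * f (x+y) * f (x+2*y))]
    refine Finset.sum_congr rfl fun n _ => ?_
    exact sum_range_zmod (fun y => f (n:ZMod N) * f ((n:ZMod N) + y) * f ((n:ZMod N) + 2*y))
  rw [hconv]
  have hN2 : (0:ℝ) < (N:ℝ)^2 := by positivity
  rw [inv_mul_eq_div, le_div_iff₀ hN2]
  nlinarith [hS, hT0, hT3]

noncomputable def F3 : ZMod 3 → ℝ := fun a => if a = 0 then 0 else 1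

lemma ind_eq (N : ℕ) [NeZero N] (h3 : 3 ∣ N) (x : ZMod N) :
    nonMultiplesOfThreeIndicator N x = F3 (ZMod.castHom h3 (ZMod 3) x) := by
  have h : (ZMod.castHom h3 (ZMod 3)) x = ((x.val : ℕ) : ZMod 3) := by
    rw [ZMod.castHom_apply, ← ZMod.natCast_val]
  simp only [nonMultiplesOfThreeIndicator, F3, h, ZMod.natCast_eq_zero_iff]

lemma castHom_natCast (N : ℕ) [NeZero N] (h3 : 3 ∣ N) (n : ℕ) :
    (ZMod.castHom h3 (ZMod 3)) ((n : ZMod N)) = (n : ZMod 3) := map_natCast _ n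

lemma F3sum : (∑ a : ZMod 3, ∑ b : ZMod 3, F3 a * F3 (a + b) * F3 (a + 2*b)) = 2 := by
  rw [sum_univ_zmod3 (fun a => ∑ b : ZMod 3, F3 a * F3 (a+b) * F3 (a+2*b))]
  rw [sum_univ_zmod3, sum_univ_zmod3, sum_univ_zmod3]
  simp (config := { decide := true }) only [F3]
  norm_num

lemma F3sum1 : (∑ a : ZMod 3, F3 a) = 2 := by
  rw [sum_univ_zmod3]
  norm_num [F3, show (2:ZMod 3) ≠ 0 by decide, show (1:ZMod 3) ≠ 0 by decide]

theorem rho_two_thirds_of_odd_multiple_of_three (N : ℕ) (hN : 0 < N)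
    (hodd : Odd N) (h3 : 3 ∣ N) :
    rho (2 / 3) N = 2 / 9 ∧
    (∀ n, nonMultiplesOfThreeIndicator N n ∈ Set.Icc (0 : ℝ) 1) ∧
    (2 : ℝ) / 3 ≤ expect N (nonMultiplesOfThreeIndicator N) ∧
    lambda3 N (nonMultiplesOfThreeIndicator N) = 2 / 9 := by
  haveI : NeZero N := ⟨hN.ne'⟩
  obtain ⟨M, hM⟩ := id h3
  have hMpos : 0 < M := by omega
  have hMR : (0:ℝ) < M := by exact_mod_cast hMpos
  have hbd : ∀ n, nonMultiplesOfThreeIndicator N n ∈ Set.Icc (0 : ℝ) 1 := by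
    intro n
    rw [nonMultiplesOfThreeIndicator]
    split <;> norm_num
  -- summand identification
  have hsummand : ∀ n d : ℕ,
      nonMultiplesOfThreeIndicator N (n : ZMod N) *
        nonMultiplesOfThreeIndicator N ((n : ZMod N) + (d : ZMod N)) *
        nonMultiplesOfThreeIndicator N ((n : ZMod N) + 2 * (d : ZMod N))
      = F3 ((n : ZMod 3)) * F3 ((n : ZMod 3) + (d : ZMod 3))
        * F3 ((n : ZMod 3) + 2 * (d : ZMod 3)) := by
    intro n d
    rw [ind_eq N h3, ind_eq N h3, ind_eq N h3, map_add, map_add, map_mul,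
      castHom_natCast, castHom_natCast, map_ofNat]
  have hone : ∀ n : ℕ,
      nonMultiplesOfThreeIndicator N (n : ZMod N) = F3 ((n : ZMod 3)) := by
    intro n; rw [ind_eq N h3, castHom_natCast]
  -- expectation
  have hexp : expect N (nonMultiplesOfThreeIndicator N) = 2 / 3 := by
    simp only [_root_.expect]
    rw [Finset.sum_congr rfl fun n _ => hone n, hM, sum_range_three_mul]
    have h2 : F3 0 + F3 1 + F3 2 = 2 := by rw [← sum_univ_zmod3]; exact F3sum1
    rw [h2]
    push_cast
    field_simp
  -- lambda3 value
  have hlam : lambda3 N (nonMultiplesOfThreeIndicator N) = 2 / 9 := by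
    rw [lambda3]
    rw [Finset.sum_congr rfl fun n _ => Finset.sum_congr rfl fun d _ => hsummand n d]
    have hinner : ∀ n : ℕ, ∑ d ∈ range N,
        (F3 ((n : ZMod 3)) * F3 ((n : ZMod 3) + (d : ZMod 3))
          * F3 ((n : ZMod 3) + 2 * (d : ZMod 3)))
        = (M : ℝ) * (F3 ((n:ZMod 3)) * F3 ((n:ZMod 3) + 0) * F3 ((n:ZMod 3) + 2*0)
          + F3 ((n:ZMod 3)) * F3 ((n:ZMod 3) + 1) * F3 ((n:ZMod 3) + 2*1)
          + F3 ((n:ZMod 3)) * F3 ((n:ZMod 3) + 2) * F3 ((n:ZMod 3) + 2*2)) := by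
      intro n
      rw [hM]
      exact sum_range_three_mul M
        (fun b => F3 ((n:ZMod 3)) * F3 ((n:ZMod 3) + b) * F3 ((n:ZMod 3) + 2*b))
    rw [Finset.sum_congr rfl fun n _ => hinner n, hM, sum_range_three_mul M
      (fun a => (M : ℝ) * (F3 a * F3 (a + 0) * F3 (a + 2*0)
        + F3 a * F3 (a + 1) * F3 (a + 2*1) + F3 a * F3 (a + 2) * F3 (a + 2*2)))]
    have h9 : (F3 0 * F3 (0+0) * F3 (0+2*0) + F3 0 * F3 (0+1) * F3 (0+2*1)
          + F3 0 * F3 (0+2) * F3 (0+2*2))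
        + (F3 1 * F3 (1+0) * F3 (1+2*0) + F3 1 * F3 (1+1) * F3 (1+2*1)
          + F3 1 * F3 (1+2) * F3 (1+2*2))
        + (F3 2 * F3 (2+0) * F3 (2+2*0) + F3 2 * F3 (2+1) * F3 (2+2*1)
          + F3 2 * F3 (2+2) * F3 (2+2*2)) = 2 := by
      have := F3sum
      rw [sum_univ_zmod3 (fun a => ∑ b : ZMod 3, F3 a * F3 (a+b) * F3 (a+2*b)),
        sum_univ_zmod3, sum_univ_zmod3, sum_univ_zmod3] at this
      exact this
    rw [show ∀ x y z : ℝ, (M:ℝ) * x + (M:ℝ) * y + (M:ℝ) * z = (M:ℝ) * (x + y + z)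
      from fun x y z => by ring] at *
    rw [h9]
    push_cast
    field_simp
    ring
  refine ⟨?_, hbd, le_of_eq hexp.symm, hlam⟩
  -- the sInf
  have hmem : (2:ℝ)/9 ∈ {x : ℝ | ∃ f : ZMod N → ℝ,
      (∀ n, f n ∈ Set.Icc (0 : ℝ) 1) ∧ 2/3 ≤ expect N f ∧ lambda3 N f = x} :=
    ⟨nonMultiplesOfThreeIndicator N, hbd, le_of_eq hexp.symm, hlam⟩
  have hlb : ∀ x ∈ {x : ℝ | ∃ f : ZMod N → ℝ,
      (∀ n, f n ∈ Set.Icc (0 : ℝ) 1) ∧ 2/3 ≤ expect N f ∧ lambda3 N f = x},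
      (2:ℝ)/9 ≤ x := by
    rintro x ⟨f, hf, hm, rfl⟩
    exact lambda3_ge N hN hodd f hf hm
  rw [rho]
  exact le_antisymm (csInf_le ⟨2/9, hlb⟩ hmem) (le_csInf ⟨2/9, hmem⟩ hlb)
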